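/- Let C ⊂ ℝ^d be a finite regular convex independent set. Then there exist a convex cap C_A ⊆ C and a convex cup C_B ⊆ C such that C_A ∪ C_B = C and C_A ∩ C_B = ∂_π C. -/

import Mathlib

open scoped BigOperators ENNReal

noncomputable section

/-- The projection `π : ℝ^d → ℝ^{d−1}` forgetting the last coordinate. -/
def proj {d : ℕ} (x : EuclideanSpace ℝ (Fin d)) : EuclideanSpace ℝ (Fin (d - 1)) :=
  WithLp.toLp 2 (fun i => x (Fin.castLE (Nat.sub_le d 1) i))

/-- The height `h(x) = x_d`, the last coordinate of `x ∈ ℝ^d` (junk value `0` for `d = 0`). -/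
def hCoord {d : ℕ} (x : EuclideanSpace ℝ (Fin d)) : ℝ :=
  if h : 0 < d then x ⟨d - 1, by omega⟩ else 0

/-- The first coordinate of `x ∈ ℝ^d` (junk value `0` for `d = 0`). -/
def firstCoord {d : ℕ} (x : EuclideanSpace ℝ (Fin d)) : ℝ :=
  if h : 0 < d then x ⟨0, h⟩ else 0

/-- A set `Q ⊆ ℝ^m` is in affinely general position if any `m+1` of its points are
affinely independent. -/
def AffGenPos {m : ℕ} (Q : Set (EuclideanSpace ℝ (Fin m))) : Prop :=
  ∀ s : Finset (EuclideanSpace ℝ (Fin m)), ↑s ⊆ Q → s.card = m + 1 →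
    AffineIndependent ℝ (fun x : s => (x : EuclideanSpace ℝ (Fin m)))

/-- A set `Q ⊆ ℝ^d` is convex independent if it is in general position and no point of `Q`
lies in the convex hull of the other points of `Q`. -/
def ConvIndep {d : ℕ} (Q : Set (EuclideanSpace ℝ (Fin d))) : Prop :=
  AffGenPos Q ∧ ∀ q ∈ Q, q ∉ convexHull ℝ (Q \ {q})

/-- A finite set `P ⊆ ℝ^d` is regular if (R1) the projection of `P` to each coordinate axis is
injective; (R2) `π(P)` is in affinely general position in `ℝ^{d−1}`; (R3) for every generic pair
`(S, T)` of `P` (disjoint nonempty subsets with `|S| + |T| = d + 1`), the affine spans of `π(S)`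
and `π(T)` intersect in exactly one point. -/
def Regular {d : ℕ} (P : Set (EuclideanSpace ℝ (Fin d))) : Prop :=
  (∀ i : Fin d, Set.InjOn (fun p : EuclideanSpace ℝ (Fin d) => p i) P) ∧
  AffGenPos (proj '' P) ∧
  (∀ S T : Finset (EuclideanSpace ℝ (Fin d)), ↑S ⊆ P → ↑T ⊆ P → Disjoint S T →
    S.Nonempty → T.Nonempty → S.card + T.card = d + 1 →
    ∃! q : EuclideanSpace ℝ (Fin (d - 1)),
      q ∈ affineSpan ℝ (proj '' (S : Set (EuclideanSpace ℝ (Fin d)))) ∧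
      q ∈ affineSpan ℝ (proj '' (T : Set (EuclideanSpace ℝ (Fin d)))))

/-- `A` is high above `B` if `A`, `B` are disjoint, `A ∪ B` is regular, and for every generic pair
`(S, T)` of `A ∪ B` with `S ⊆ A`, `T ⊆ B`, the points `s ∈ aff S`, `t ∈ aff T` with
`π(s) = π(t)` satisfy `h(s) > h(t)`. -/
def HighAbove {d : ℕ} (A B : Set (EuclideanSpace ℝ (Fin d))) : Prop :=
  Disjoint A B ∧ Regular (A ∪ B) ∧
  ∀ S T : Finset (EuclideanSpace ℝ (Fin d)), ↑S ⊆ A → ↑T ⊆ B →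
    S.Nonempty → T.Nonempty → S.card + T.card = d + 1 →
    ∀ s t : EuclideanSpace ℝ (Fin d),
      s ∈ affineSpan ℝ (S : Set (EuclideanSpace ℝ (Fin d))) →
      t ∈ affineSpan ℝ (T : Set (EuclideanSpace ℝ (Fin d))) →
      proj s = proj t → hCoord t < hCoord s

/-- A regular set `P ⊆ ℝ^d` is a convex cup if whenever `p, p₁, …, p_d ∈ P` are distinct points
with `π(p) = ∑ cᵢ π(pᵢ)`, all `cᵢ ∈ (0,1)` and `∑ cᵢ = 1`, then `h(p) < ∑ cᵢ h(pᵢ)`. -/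
def ConvexCup {d : ℕ} (P : Set (EuclideanSpace ℝ (Fin d))) : Prop :=
  Regular P ∧
  ∀ (p : EuclideanSpace ℝ (Fin d)) (q : Fin d → EuclideanSpace ℝ (Fin d)) (c : Fin d → ℝ),
    p ∈ P → (∀ i, q i ∈ P) → Function.Injective q → (∀ i, p ≠ q i) →
    (∀ i, c i ∈ Set.Ioo (0 : ℝ) 1) → ∑ i, c i = 1 →
    proj p = ∑ i, c i • proj (q i) →
    hCoord p < ∑ i, c i * hCoord (q i)

/-- A regular set `P ⊆ ℝ^d` is a convex cap if whenever `p, p₁, …, p_d ∈ P` are distinct points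
with `π(p) = ∑ cᵢ π(pᵢ)`, all `cᵢ ∈ (0,1)` and `∑ cᵢ = 1`, then `h(p) > ∑ cᵢ h(pᵢ)`. -/
def ConvexCap {d : ℕ} (P : Set (EuclideanSpace ℝ (Fin d))) : Prop :=
  Regular P ∧
  ∀ (p : EuclideanSpace ℝ (Fin d)) (q : Fin d → EuclideanSpace ℝ (Fin d)) (c : Fin d → ℝ),
    p ∈ P → (∀ i, q i ∈ P) → Function.Injective q → (∀ i, p ≠ q i) →
    (∀ i, c i ∈ Set.Ioo (0 : ℝ) 1) → ∑ i, c i = 1 →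
    proj p = ∑ i, c i • proj (q i) →
    ∑ i, c i * hCoord (q i) < hCoord p

/-- `∂_π P`, the set of points of `P` whose projection does not lie in the interior of the
convex hull of `π(P)`. -/
def piBoundary {d : ℕ} (P : Set (EuclideanSpace ℝ (Fin d))) : Set (EuclideanSpace ℝ (Fin d)) :=
  {p ∈ P | proj p ∉ interior (convexHull ℝ (proj '' P))}

/-- The rank of `p` in `P`: the number of points of `P` whose first coordinate is at most that
of `p`.  If `P` is sorted as `p₁, p₂, …` by strictly increasing first coordinate, then
`rank P pₜ = t`. -/
def rank {d : ℕ} (P : Set (EuclideanSpace ℝ (Fin d))) (p : EuclideanSpace ℝ (Fin d)) : ℕ :=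
  Set.ncard {q ∈ P | firstCoord q ≤ firstCoord p}

/-- The subset `P_{a,b} = {p_t ∈ P : t ≡ a (mod b)}` of `P` (sorted by first coordinate). -/
def modClass {d : ℕ} (a b : ℕ) (P : Set (EuclideanSpace ℝ (Fin d))) :
    Set (EuclideanSpace ℝ (Fin d)) :=
  {p ∈ P | rank P p % b = a % b}

/-- `d`-oscillators, defined recursively: (O1) any one-point set, and any finite subset of `ℝ¹`,
is an oscillator; (O2) for `d ≥ 2` a finite set `P` with `|P| ≥ 2` is a `d`-oscillator if it is
regular, both `P_{1,2}` and `P_{2,2}` are `d`-oscillators, one of `P_{1,2}`, `P_{2,2}` is high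
above the other, and `π(P)` is a `(d−1)`-oscillator. -/
inductive IsOscillator : (d : ℕ) → Set (EuclideanSpace ℝ (Fin d)) → Prop
  | single {d : ℕ} (p : EuclideanSpace ℝ (Fin d)) : IsOscillator d {p}
  | dimOne (P : Set (EuclideanSpace ℝ (Fin 1))) (hfin : P.Finite) : IsOscillator 1 P
  | step {d : ℕ} (P : Set (EuclideanSpace ℝ (Fin d))) (hd : 2 ≤ d) (hfin : P.Finite)
      (hcard : 2 ≤ P.ncard) (hreg : Regular P)
      (h1 : IsOscillator d (modClass 1 2 P))
      (h2 : IsOscillator d (modClass 2 2 P))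
      (hab : HighAbove (modClass 1 2 P) (modClass 2 2 P) ∨
        HighAbove (modClass 2 2 P) (modClass 1 2 P))
      (hproj : IsOscillator (d - 1) (proj '' P)) : IsOscillator d P

/-- A finite set `P ⊆ ℝ^d` is generic if for any disjoint nonempty subsets `S, T` of `P` with
`|S| + |T| = d + 2`, the affine spans of `S` and `T` intersect in exactly one point. -/
def GenericSet {d : ℕ} (P : Set (EuclideanSpace ℝ (Fin d))) : Prop :=
  ∀ S T : Finset (EuclideanSpace ℝ (Fin d)), ↑S ⊆ P → ↑T ⊆ P → Disjoint S T →
    S.Nonempty → T.Nonempty → S.card + T.card = d + 2 →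
    ∃! x : EuclideanSpace ℝ (Fin d),
      x ∈ affineSpan ℝ (S : Set (EuclideanSpace ℝ (Fin d))) ∧
      x ∈ affineSpan ℝ (T : Set (EuclideanSpace ℝ (Fin d)))

/-- The point of `ℝ^d` obtained from `y ∈ ℝ^{d−1}` by appending a last coordinate `t`. -/
def lift {d : ℕ} (y : EuclideanSpace ℝ (Fin (d - 1))) (t : ℝ) : EuclideanSpace ℝ (Fin d) :=
  WithLp.toLp 2 (fun i : Fin d => if h : (i : ℕ) < d - 1 then y ⟨i, h⟩ else t)

/-- `(N)_ε = ∑_{k≥0} a_k ε^{k+1}` where `N = ∑_{k≥0} a_k 2^k` is the binary expansion of `N`. -/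
def binRep (ε : ℝ) (N : ℕ) : ℝ :=
  ∑ k ∈ Finset.range (N + 1), if N.testBit k then ε ^ (k + 1) else 0

/-- The stretch `str_P(C) = i_k − i_1` of a subset `C` of a `d`-oscillator `P` (sorted by first
coordinate), where `i_1 < … < i_k` are the indices of the elements of `C` in `P`. -/
def stretch {d : ℕ} (P C : Set (EuclideanSpace ℝ (Fin d))) : ℕ :=
  sSup (rank P '' C) - sInf (rank P '' C)

/-- `Δ_d(k)`: the minimum stretch `str_P(C)` over all finite `d`-oscillators `P` and all
`k`-point convex independent subsets `C ⊆ P` (`= ∞` if there are none). -/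
def Delta (d k : ℕ) : ℝ≥0∞ :=
  sInf {s : ℝ≥0∞ | ∃ P C : Set (EuclideanSpace ℝ (Fin d)),
    IsOscillator d P ∧ C ⊆ P ∧ ConvIndep C ∧ C.ncard = k ∧ s = (stretch P C : ℝ≥0∞)}

/-- `Δ'_d(k)`: the minimum stretch `str_P(C)` over all finite `d`-oscillators `P` and all
`k`-point subsets `C ⊆ P` that are convex cups or convex caps (`= ∞` if there are none). -/
def Delta' (d k : ℕ) : ℝ≥0∞ :=
  sInf {s : ℝ≥0∞ | ∃ P C : Set (EuclideanSpace ℝ (Fin d)),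
    IsOscillator d P ∧ C ⊆ P ∧ (ConvexCup C ∨ ConvexCap C) ∧ C.ncard = k ∧
      s = (stretch P C : ℝ≥0∞)}

/-! Every point `p` of a convex independent set `C` is an extreme point of `K = conv C`, hence it is
the highest or the lowest point of `K` on the vertical line through `p`. Let `C_A` (resp. `C_B`) be
the highest (resp. lowest) points together with `∂_π C`. If `π(p)` is interior to `conv π(C)`, it is
a convex combination of the other projections, and lifting it gives a second point of `K` on the
vertical line of `p`; so a point that is both highest and lowest lies in `∂_π C`. For the cap
inequality at `p` with `π(p) = ∑ cᵢ π(pᵢ)`: by regularity the `π(pᵢ)` form an affine basis, so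
`π(p)` is interior and `p` is highest on its line, while `∑ cᵢ pᵢ ∈ K` lies on that line and
differs from `p`, hence lies strictly below it. -/

open Set

section ConvexGeometry

variable {V : Type*}

theorem mem_extremePoints_convexHull_of_notMem_convexHull_sdiff [AddCommGroup V] [Module ℝ V]
    {A : Set V} {p : V} (hp : p ∈ A) (hpA : p ∉ convexHull ℝ (A \ {p})) :
    p ∈ (convexHull ℝ A).extremePoints ℝ := by
  rw [← insert_sdiff_self_of_mem hp]
  rcases (A \ {p}).eq_empty_or_nonempty with hB | hB
  · rw [hB, insert_empty_eq, convexHull_singleton, extremePoints_singleton]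
    exact mem_singleton p
  rw [convexHull_insert hB, mem_extremePoints_iff_left]
  refine ⟨subset_convexJoin_left hB.convexHull (mem_singleton p), ?_⟩
  simp only [mem_convexJoin, mem_singleton_iff, exists_eq_left]
  rintro _ ⟨b, hb, α, β, -, hβ, hαβ, rfl⟩ _ ⟨b', hb', α', β', -, hβ', hαβ', rfl⟩
    ⟨a, c, ha, hc, hac, hxy⟩
  -- `x` and `y` lie on segments from `p` to `b, b' ∈ conv (A \ {p})`; unless both are degenerate,
  -- rescaling `s • p = (a * β) • b + (c * β') • b'` puts `p` in `conv (A \ {p})`.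
  set s := a * β + c * β'
  have hps : s • p = (a * β) • b + (c * β') • b' := by
    linear_combination (norm := module) -hxy + (a * hαβ + c * hαβ' + hac) • p
  have hs : s = 0 := by
    refine (eq_or_lt_of_le (by positivity : 0 ≤ s)).elim Eq.symm fun hs => absurd ?_ hpA
    have hcomb := convex_convexHull ℝ (A \ {p}) hb hb' (by positivity : 0 ≤ a * β / s)
      (by positivity : 0 ≤ c * β' / s) (by rw [← add_div, div_self hs.ne'])
    convert hcomb using 1
    rw [← inv_smul_smul₀ hs.ne' p, hps]
    module
  have hβ0 : β = 0 := by
    have : a * β = 0 := by linarith [mul_nonneg ha.le hβ, mul_nonneg hc.le hβ']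
    exact (mul_eq_zero.1 this).resolve_left ha.ne'
  rw [hβ0, zero_smul, add_zero, show α = 1 by linarith, one_smul]

theorem mem_convexHull_sdiff_of_mem_interior [NormedAddCommGroup V] [NormedSpace ℝ V]
    [Nontrivial V] {A : Set V} {p : V} (hp : p ∈ A)
    (hint : p ∈ interior (convexHull ℝ A)) : p ∈ convexHull ℝ (A \ {p}) := by
  by_contra hpA
  exact disjoint_left.1 (disjoint_interior_extremePoints _) hint
    (mem_extremePoints_convexHull_of_notMem_convexHull_sdiff hp hpA)

theorem AffineIndependent.sum_smul_mem_interior_convexHull [NormedAddCommGroup V]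
    [NormedSpace ℝ V] [FiniteDimensional ℝ V] {ι : Type*} [Fintype ι] {v : ι → V}
    (hv : AffineIndependent ℝ v)
    (hcard : Fintype.card ι = Module.finrank ℝ V + 1) {c : ι → ℝ} (hc : ∀ i, 0 < c i)
    (hc1 : ∑ i, c i = 1) : ∑ i, c i • v i ∈ interior (convexHull ℝ (range v)) := by
  let b : AffineBasis ι ℝ V :=
    ⟨v, hv, hv.affineSpan_eq_top_iff_card_eq_finrank_add_one.2 hcard⟩
  change _ ∈ interior (convexHull ℝ (range b))
  rw [b.interior_convexHull, ← Finset.univ.affineCombination_eq_linear_combination _ _ hc1]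
  intro i
  exact (b.coord_apply_combination_of_mem (Finset.mem_univ i) hc1).symm ▸ hc i

end ConvexGeometry

section Projection

variable {d : ℕ}

def projₗ : EuclideanSpace ℝ (Fin d) →ₗ[ℝ] EuclideanSpace ℝ (Fin (d - 1)) where
  toFun := proj
  map_add' _ _ := rfl
  map_smul' _ _ := rfl

def hCoordₗ : EuclideanSpace ℝ (Fin d) →ₗ[ℝ] ℝ where
  toFun := hCoord
  map_add' x y := by unfold hCoord; split_ifs <;> simp
  map_smul' c x := by unfold hCoord; split_ifs <;> simp

@[simp] theorem projₗ_apply (x : EuclideanSpace ℝ (Fin d)) : projₗ x = proj x := rfl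

@[simp] theorem hCoordₗ_apply (x : EuclideanSpace ℝ (Fin d)) : hCoordₗ x = hCoord x := rfl

theorem coe_projₗ : ⇑(projₗ (d := d)) = proj := rfl

theorem eq_of_proj_eq_of_hCoord_eq {x y : EuclideanSpace ℝ (Fin d)} (hproj : proj x = proj y)
    (hh : hCoord x = hCoord y) : x = y := by
  ext i
  rcases lt_or_ge (i : ℕ) (d - 1) with hi | hi
  · simpa [proj, Fin.castLE] using congr($hproj ⟨i, hi⟩)
  · have hi : i = ⟨d - 1, by omega⟩ := Fin.ext (by dsimp only; omega)
    simpa [hCoord, i.pos, hi] using hh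

theorem proj_injOn_of_regular (hd : 2 ≤ d) {C : Set (EuclideanSpace ℝ (Fin d))}
    (hreg : Regular C) : InjOn proj C := fun x hx y hy hxy =>
  hreg.1 ⟨0, by omega⟩ hx hy (by simpa [proj, Fin.castLE] using congr($hxy ⟨0, by omega⟩))

theorem Regular.mono {C D : Set (EuclideanSpace ℝ (Fin d))} (hC : Regular C) (hDC : D ⊆ C) :
    Regular D :=
  ⟨fun i => (hC.1 i).mono hDC, fun s hs => hC.2.1 s (hs.trans (image_mono hDC)),
    fun S T hS hT => hC.2.2 S T (hS.trans hDC) (hT.trans hDC)⟩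

theorem Regular.affineIndependent_proj_comp (hd : 2 ≤ d) {C : Set (EuclideanSpace ℝ (Fin d))}
    (hreg : Regular C) {q : Fin d → EuclideanSpace ℝ (Fin d)} (hq : ∀ i, q i ∈ C)
    (hqinj : Function.Injective q) : AffineIndependent ℝ (proj ∘ q) := by
  classical
  have hinj : Function.Injective (proj ∘ q) := fun i j hij =>
    hqinj (proj_injOn_of_regular hd hreg (hq i) (hq j) hij)
  have hind := hreg.2.1 (Finset.univ.image (proj ∘ q))
    (by simpa [range_subset_iff] using fun i => mem_image_of_mem proj (hq i))
    (by rw [Finset.card_image_of_injective _ hinj, Finset.card_fin]; omega)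
  exact .of_set_of_injective (hind.mono (t := ↑(Finset.univ.image (proj ∘ q)))
    (by rw [Finset.coe_image, Finset.coe_univ, image_univ])) hinj

theorem Regular.sum_smul_proj_mem_interior (hd : 2 ≤ d) {C : Set (EuclideanSpace ℝ (Fin d))}
    (hreg : Regular C) {q : Fin d → EuclideanSpace ℝ (Fin d)} (hq : ∀ i, q i ∈ C)
    (hqinj : Function.Injective q) {c : Fin d → ℝ} (hc : ∀ i, 0 < c i) (hc1 : ∑ i, c i = 1) :
    ∑ i, c i • proj (q i) ∈ interior (convexHull ℝ (proj '' C)) :=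
  interior_mono (convexHull_mono (range_subset_iff.2 fun i => mem_image_of_mem proj (hq i)))
    ((hreg.affineIndependent_proj_comp hd hq hqinj).sum_smul_mem_interior_convexHull
      (by rw [Fintype.card_fin, finrank_euclideanSpace_fin]; omega) hc hc1)

theorem exists_mem_convexHull_sdiff_proj_eq (hd : 2 ≤ d) {C : Set (EuclideanSpace ℝ (Fin d))}
    {p : EuclideanSpace ℝ (Fin d)} (hp : p ∈ C)
    (hint : proj p ∈ interior (convexHull ℝ (proj '' C))) :
    ∃ x ∈ convexHull ℝ (C \ {p}), proj x = proj p := by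
  have : Nonempty (Fin (d - 1)) := ⟨⟨0, by omega⟩⟩
  have hsub : proj '' C \ {proj p} ⊆ proj '' (C \ {p}) := by
    rintro _ ⟨⟨x, hx, rfl⟩, hxp⟩
    exact ⟨x, ⟨hx, fun h => hxp (congrArg proj h)⟩, rfl⟩
  have h := convexHull_mono hsub
    (mem_convexHull_sdiff_of_mem_interior (mem_image_of_mem _ hp) hint)
  rwa [← coe_projₗ, ← projₗ.image_convexHull] at h


def IsTopOfFiber (K : Set (EuclideanSpace ℝ (Fin d))) (p : EuclideanSpace ℝ (Fin d)) : Prop :=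
  ∀ x ∈ K, proj x = proj p → hCoord x ≤ hCoord p

def IsBottomOfFiber (K : Set (EuclideanSpace ℝ (Fin d))) (p : EuclideanSpace ℝ (Fin d)) :
    Prop :=
  ∀ x ∈ K, proj x = proj p → hCoord p ≤ hCoord x

section Fibers

variable {K : Set (EuclideanSpace ℝ (Fin d))} {p x : EuclideanSpace ℝ (Fin d)}

theorem IsTopOfFiber.hCoord_lt (hp : IsTopOfFiber K p) (hx : x ∈ K) (hxp : proj x = proj p)
    (hne : x ≠ p) : hCoord x < hCoord p :=
  (hp x hx hxp).lt_of_ne fun hh => hne (eq_of_proj_eq_of_hCoord_eq hxp hh)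

theorem IsBottomOfFiber.hCoord_lt (hp : IsBottomOfFiber K p) (hx : x ∈ K)
    (hxp : proj x = proj p) (hne : x ≠ p) : hCoord p < hCoord x :=
  (hp x hx hxp).lt_of_ne fun hh => hne (eq_of_proj_eq_of_hCoord_eq hxp hh.symm)

theorem isTopOfFiber_or_isBottomOfFiber (hp : p ∈ K.extremePoints ℝ) :
    IsTopOfFiber K p ∨ IsBottomOfFiber K p := by
  by_contra! h
  simp only [IsTopOfFiber, IsBottomOfFiber, not_forall, not_le] at h
  obtain ⟨⟨x, hx, hxp, hpx⟩, ⟨y, hy, hyp, hyp'⟩⟩ := h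
  set t := (hCoord p - hCoord y) / (hCoord x - hCoord y) with ht
  have hxy : 0 < hCoord x - hCoord y := by linarith
  have hseg : p ∈ openSegment ℝ y x := by
    refine ⟨1 - t, t, by rw [sub_pos, div_lt_one hxy]; linarith, div_pos (by linarith) hxy,
      by ring, eq_of_proj_eq_of_hCoord_eq ?_ ?_⟩
    · rw [← projₗ_apply, map_add, map_smul, map_smul, projₗ_apply, projₗ_apply, hxp, hyp,
        ← add_smul, sub_add_cancel, one_smul]
    · rw [← hCoordₗ_apply, map_add, map_smul, map_smul, hCoordₗ_apply, hCoordₗ_apply,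
        smul_eq_mul, smul_eq_mul, ht]
      field_simp
      ring
  exact hyp'.ne (congrArg hCoord (hp.2 hy hx hseg))

end Fibers

section CapCup

variable {C A : Set (EuclideanSpace ℝ (Fin d))} {p : EuclideanSpace ℝ (Fin d)}

theorem exists_mem_convexHull_sdiff_of_proj_eq_sum {q : Fin d → EuclideanSpace ℝ (Fin d)}
    {c : Fin d → ℝ} (hq : ∀ i, q i ∈ C) (hpq : ∀ i, p ≠ q i) (hc : ∀ i, 0 ≤ c i)
    (hc1 : ∑ i, c i = 1) (hcomb : proj p = ∑ i, c i • proj (q i)) :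
    ∃ x ∈ convexHull ℝ (C \ {p}), proj x = proj p ∧ hCoord x = ∑ i, c i * hCoord (q i) := by
  refine ⟨∑ i, c i • q i, (convex_convexHull ℝ _).sum_mem (fun i _ => hc i) hc1
    fun i _ => subset_convexHull ℝ _ ⟨hq i, (hpq i).symm⟩, ?_, ?_⟩
  · simp only [hcomb, ← projₗ_apply, map_sum, map_smul]
  · simp only [← hCoordₗ_apply, map_sum, map_smul, smul_eq_mul]

theorem convexCap_of_isTopOfFiber (hd : 2 ≤ d) (hreg : Regular C)
    (hC : ∀ p ∈ C, p ∉ convexHull ℝ (C \ {p})) (hAC : A ⊆ C)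
    (htop : ∀ p ∈ A, proj p ∈ interior (convexHull ℝ (proj '' C)) →
      IsTopOfFiber (convexHull ℝ C) p) :
    ConvexCap A := by
  refine ⟨hreg.mono hAC, fun p q c hp hq hqinj hpq hc hc1 hcomb => ?_⟩
  have hqC i := hAC (hq i)
  obtain ⟨x, hx, hxp, hxh⟩ := exists_mem_convexHull_sdiff_of_proj_eq_sum hqC hpq
    (fun i => (hc i).1.le) hc1 hcomb
  have hint := hcomb ▸ hreg.sum_smul_proj_mem_interior hd hqC hqinj (fun i => (hc i).1) hc1
  rw [← hxh]
  exact (htop p hp hint).hCoord_lt (convexHull_mono sdiff_subset hx) hxp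
    fun h => hC p (hAC hp) (h ▸ hx)

theorem convexCup_of_isBottomOfFiber (hd : 2 ≤ d) (hreg : Regular C)
    (hC : ∀ p ∈ C, p ∉ convexHull ℝ (C \ {p})) (hAC : A ⊆ C)
    (hbot : ∀ p ∈ A, proj p ∈ interior (convexHull ℝ (proj '' C)) →
      IsBottomOfFiber (convexHull ℝ C) p) :
    ConvexCup A := by
  refine ⟨hreg.mono hAC, fun p q c hp hq hqinj hpq hc hc1 hcomb => ?_⟩
  have hqC i := hAC (hq i)
  obtain ⟨x, hx, hxp, hxh⟩ := exists_mem_convexHull_sdiff_of_proj_eq_sum hqC hpq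
    (fun i => (hc i).1.le) hc1 hcomb
  have hint := hcomb ▸ hreg.sum_smul_proj_mem_interior hd hqC hqinj (fun i => (hc i).1) hc1
  rw [← hxh]
  exact (hbot p hp hint).hCoord_lt (convexHull_mono sdiff_subset hx) hxp
    fun h => hC p (hAC hp) (h ▸ hx)

theorem mem_piBoundary_of_isTopOfFiber_of_isBottomOfFiber (hd : 2 ≤ d) (hp : p ∈ C)
    (hpC : p ∉ convexHull ℝ (C \ {p})) (htop : IsTopOfFiber (convexHull ℝ C) p)
    (hbot : IsBottomOfFiber (convexHull ℝ C) p) : p ∈ piBoundary C := by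
  refine ⟨hp, fun hint => ?_⟩
  obtain ⟨x, hx, hxp⟩ := exists_mem_convexHull_sdiff_proj_eq hd hp hint
  have hxK := convexHull_mono sdiff_subset hx
  exact (htop.hCoord_lt hxK hxp fun h => hpC (h ▸ hx)).not_ge (hbot x hxK hxp)

end CapCup

end Projection

theorem stmt6_general (d : ℕ) (hd : 2 ≤ d) (C : Set (EuclideanSpace ℝ (Fin d)))
    (hreg : Regular C) (hci : ConvIndep C) :
    ∃ CA CB : Set (EuclideanSpace ℝ (Fin d)), CA ⊆ C ∧ CB ⊆ C ∧
      ConvexCap CA ∧ ConvexCup CB ∧ CA ∪ CB = C ∧ CA ∩ CB = piBoundary C := by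
  set K := convexHull ℝ C
  have hbd : piBoundary C ⊆ C := sep_subset _ _
  have hAC : {p ∈ C | IsTopOfFiber K p} ∪ piBoundary C ⊆ C :=
    union_subset (sep_subset _ _) hbd
  have hBC : {p ∈ C | IsBottomOfFiber K p} ∪ piBoundary C ⊆ C :=
    union_subset (sep_subset _ _) hbd
  refine ⟨_, _, hAC, hBC, convexCap_of_isTopOfFiber hd hreg hci.2 hAC ?_,
    convexCup_of_isBottomOfFiber hd hreg hci.2 hBC ?_, ?_, ?_⟩
  · rintro p (hp | hp) hint
    exacts [hp.2, absurd hint hp.2]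
  · rintro p (hp | hp) hint
    exacts [hp.2, absurd hint hp.2]
  · refine (union_subset hAC hBC).antisymm fun p hp => ?_
    rcases isTopOfFiber_or_isBottomOfFiber
      (mem_extremePoints_convexHull_of_notMem_convexHull_sdiff hp (hci.2 p hp)) with h | h
    exacts [Or.inl (Or.inl ⟨hp, h⟩), Or.inr (Or.inl ⟨hp, h⟩)]
  · rw [← inter_union_distrib_right, union_eq_right]
    rintro p ⟨⟨hp, htop⟩, -, hbot⟩
    exact mem_piBoundary_of_isTopOfFiber_of_isBottomOfFiber hd hp (hci.2 p hp) htop hbot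

theorem stmt6 (d : ℕ) (hd : 2 ≤ d) (C : Set (EuclideanSpace ℝ (Fin d))) (hfin : C.Finite)
    (hreg : Regular C) (hci : ConvIndep C) :
    ∃ CA CB : Set (EuclideanSpace ℝ (Fin d)), CA ⊆ C ∧ CB ⊆ C ∧
      ConvexCap CA ∧ ConvexCup CB ∧ CA ∪ CB = C ∧ CA ∩ CB = piBoundary C :=
  stmt6_general d hd C hreg hci
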